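/- Let S_n = ∑_{i=1}^{n} √F_i denote the initial external perimeter of the Fibonacci–Theodorus spiral formed by the first n triangles, and let C = φ^2 (1 + φ^{−1/2}). Then for every integer n > 1, | S_n − C (√F_n − 5^{−1/4}) | ≤ 1. -/

import Mathlib

open Real Finset

/-- The golden ratio φ = (1+√5)/2. -/
noncomputable def phi : ℝ := (1 + Real.sqrt 5) / 2

/-- The initial external perimeter of the Fibonacci–Theodorus spiral with n triangles,
`S n = ∑_{i=1}^n √(F i)`. -/
noncomputable def S (n : ℕ) : ℝ := ∑ i ∈ Finset.Icc 1 n, Real.sqrt (Nat.fib i)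

/-- The constant `C = φ² (1 + φ^(-1/2))`. -/
noncomputable def C : ℝ := phi ^ 2 * (1 + phi ^ (-(1 : ℝ) / 2))


/-!
Let `E n` be the error `S n - C (√F_n - 5^(-1/4))` and `σ = φ^(-1/2)`. Since `C (1 - σ) = 1`,
`E (n+1) - E n = C (√F_n - σ √F_(n+1))`, and rationalising with `F_n + ψ F_(n+1) = ψ^(n+1)`
gives `E (n+1) - E n = C ψ^(n+1) / (√F_n + σ √F_(n+1))`. These increments alternate in sign
and decrease in absolute value, so for `n ≥ 2` the error lies between `E 3 ≈ -0.07` and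
`E 2 ≈ 0.45`.
-/

open scoped goldenRatio

theorem sum_range_neg_one_pow_mul_mem_Icc {α : Type*} [Ring α] [PartialOrder α]
    [IsOrderedRing α] {f : ℕ → α} (hf : Antitone f) (hf0 : ∀ n, 0 ≤ f n) (n : ℕ) :
    ∑ i ∈ range n, (-1) ^ i * f i ∈ Set.Icc 0 (f 0) := by
  induction n generalizing f with
  | zero => simpa using hf0 0
  | succ n ih =>
    obtain ⟨h0, h1⟩ := ih (f := fun i => f (i + 1)) (fun _ _ h => hf (by omega)) fun _ => hf0 _
    rw [sum_range_succ']
    simp only [pow_succ, mul_neg_one, neg_mul, sum_neg_distrib, pow_zero, one_mul,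
      neg_add_eq_sub]
    exact ⟨sub_nonneg.2 (h1.trans (hf (Nat.zero_le 1))), sub_le_self _ h0⟩

theorem rpow_neg_one_div_pow {x : ℝ} (hx : 0 ≤ x) {k : ℕ} (hk : k ≠ 0) :
    (x ^ (-1 / (k : ℝ))) ^ k = x⁻¹ := by
  rw [← Real.rpow_mul_natCast hx, div_mul_cancel₀ _ (by exact_mod_cast hk), Real.rpow_neg_one]

local notation "σ" => φ ^ (-(1 : ℝ) / 2)

lemma goldenRatio_rpow_neg_half_pos : 0 < σ := Real.rpow_pos_of_pos goldenRatio_pos _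

lemma goldenRatio_rpow_neg_half_sq : σ ^ 2 = φ⁻¹ := by
  simpa using rpow_neg_one_div_pow goldenRatio_pos.le two_ne_zero

lemma C_eq : C = φ ^ 2 * (1 + σ) := by rw [C]; rfl

lemma C_pos : 0 < C := by
  rw [C_eq]
  have := goldenRatio_rpow_neg_half_pos
  positivity

lemma C_mul_one_sub : C * (1 - σ) = 1 :=
  calc C * (1 - σ) = φ ^ 2 - φ ^ 2 * σ ^ 2 := by rw [C_eq]; ring
    _ = φ ^ 2 - φ := by
      rw [goldenRatio_rpow_neg_half_sq, sq φ, mul_inv_cancel_right₀ goldenRatio_ne_zero]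
    _ = 1 := by rw [goldenRatio_sq]; ring

lemma sqrt_fib_add_mul_sqrt_fib_succ_pos (n : ℕ) :
    0 < √(Nat.fib n) + σ * √(Nat.fib (n + 1)) := by
  have : 0 < √(Nat.fib (n + 1)) := Real.sqrt_pos.2 (by exact_mod_cast Nat.fib_pos.2 n.succ_pos)
  have := goldenRatio_rpow_neg_half_pos
  positivity

lemma sqrt_fib_sub_mul_sqrt_fib_succ (n : ℕ) :
    √(Nat.fib n) - σ * √(Nat.fib (n + 1)) =
      ψ ^ (n + 1) / (√(Nat.fib n) + σ * √(Nat.fib (n + 1))) := by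
  rw [eq_div_iff (sqrt_fib_add_mul_sqrt_fib_succ_pos n).ne', ← goldenConj_mul_fib_succ_add_fib,
    ← neg_neg ψ, ← inv_goldenRatio, ← goldenRatio_rpow_neg_half_sq]
  have ha := Real.sq_sqrt (Nat.cast_nonneg (α := ℝ) (Nat.fib n))
  have hb := Real.sq_sqrt (Nat.cast_nonneg (α := ℝ) (Nat.fib (n + 1)))
  linear_combination ha - σ ^ 2 * hb

lemma S_succ (n : ℕ) : S (n + 1) = S n + √(Nat.fib (n + 1)) :=
  sum_Icc_succ_top (by omega) _

noncomputable def perimeterError (n : ℕ) : ℝ :=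
  S n - C * (√(Nat.fib n) - 5 ^ (-(1 : ℝ) / 4))

noncomputable def perimeterErrorStep (n : ℕ) : ℝ :=
  C * (-ψ) ^ (n + 1) / (√(Nat.fib n) + σ * √(Nat.fib (n + 1)))

lemma perimeterError_succ (n : ℕ) :
    perimeterError (n + 1) = perimeterError n + (-1) ^ (n + 1) * perimeterErrorStep n := by
  have hstep : (-1) ^ (n + 1) * perimeterErrorStep n =
      C * (√(Nat.fib n) - σ * √(Nat.fib (n + 1))) := by
    rw [perimeterErrorStep, sqrt_fib_sub_mul_sqrt_fib_succ, mul_div_assoc', mul_left_comm,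
      ← mul_pow]
    simp [mul_div_assoc]
  rw [perimeterError, perimeterError, S_succ, hstep]
  linear_combination (-√(Nat.fib (n + 1))) * C_mul_one_sub

lemma neg_goldenConj_mem_Ioo : -ψ ∈ Set.Ioo 0 1 :=
  ⟨neg_pos.2 goldenConj_neg, by linarith [neg_one_lt_goldenConj]⟩

lemma perimeterErrorStep_nonneg (n : ℕ) : 0 ≤ perimeterErrorStep n := by
  have := neg_goldenConj_mem_Ioo.1
  have := C_pos
  have := sqrt_fib_add_mul_sqrt_fib_succ_pos n
  unfold perimeterErrorStep
  positivity

lemma perimeterErrorStep_antitone : Antitone perimeterErrorStep := by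
  refine antitone_nat_of_succ_le fun n => ?_
  obtain ⟨hψ0, hψ1⟩ := neg_goldenConj_mem_Ioo
  have := goldenRatio_rpow_neg_half_pos
  refine div_le_div₀ (by have := C_pos; positivity) ?_ (sqrt_fib_add_mul_sqrt_fib_succ_pos n) ?_
  · exact mul_le_mul_of_nonneg_left (pow_le_pow_of_le_one hψ0.le hψ1.le (n + 1).le_succ) C_pos.le
  · gcongr <;> omega

lemma perimeterError_add_two (m : ℕ) :
    perimeterError (m + 2) =
      perimeterError 2 - ∑ k ∈ range m, (-1) ^ k * perimeterErrorStep (k + 2) := by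
  induction m with
  | zero => simp
  | succ m ih =>
    rw [show m + 1 + 2 = m + 2 + 1 by ring, perimeterError_succ, ih, sum_range_succ]
    ring

lemma perimeterError_add_two_mem_Icc (m : ℕ) :
    perimeterError (m + 2) ∈ Set.Icc (perimeterError 3) (perimeterError 2) := by
  obtain ⟨h0, h1⟩ :=
    sum_range_neg_one_pow_mul_mem_Icc (f := fun k => perimeterErrorStep (k + 2))
    (fun _ _ h => perimeterErrorStep_antitone (by omega)) (fun _ => perimeterErrorStep_nonneg _) m
  have h3 : perimeterError 3 = perimeterError 2 - perimeterErrorStep 2 := by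
    rw [perimeterError_succ]
    ring
  rw [h3, perimeterError_add_two m]
  exact ⟨by linarith, by linarith⟩

lemma goldenRatio_mem_Icc : φ ∈ Set.Icc 1.6 1.7 := by
  have h1 : 2.2 ≤ √5 := Real.le_sqrt_of_sq_le (by norm_num)
  have h2 : √5 ≤ 2.4 := Real.sqrt_le_iff.2 ⟨by norm_num, by norm_num⟩
  unfold goldenRatio
  constructor <;> linarith

lemma C_mem_Icc : C ∈ Set.Icc 4 5 := by
  obtain ⟨hφ1, hφ2⟩ := goldenRatio_mem_Icc
  have hσ : σ ^ 2 * φ = 1 := by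
    rw [goldenRatio_rpow_neg_half_sq, inv_mul_cancel₀ goldenRatio_ne_zero]
  have hσ0 := goldenRatio_rpow_neg_half_pos
  have hσ1 : 0.75 ≤ σ := by nlinarith
  have hσ2 : σ ≤ 0.8 := by nlinarith
  have hC := C_mul_one_sub
  have := C_pos
  constructor <;> nlinarith

lemma five_rpow_neg_quarter_mem_Icc : (5 : ℝ) ^ (-(1 : ℝ) / 4) ∈ Set.Icc 0.66 0.7 := by
  have h := rpow_neg_one_div_pow (x := 5) (by norm_num) four_ne_zero
  have h0 : 0 ≤ (5 : ℝ) ^ (-(1 : ℝ) / 4) := by positivity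
  push_cast at h
  constructor
  · exact (pow_le_pow_iff_left₀ (by norm_num) h0 four_ne_zero).1 (by rw [h]; norm_num)
  · exact (pow_le_pow_iff_left₀ h0 (by norm_num) four_ne_zero).1 (by rw [h]; norm_num)

lemma perimeterError_two_le : perimeterError 2 ≤ 1 := by
  obtain ⟨hC, -⟩ := C_mem_Icc
  obtain ⟨-, ht⟩ := five_rpow_neg_quarter_mem_Icc
  have hS : S 2 = 2 := by norm_num [S, sum_Icc_succ_top]
  rw [perimeterError, hS, Nat.fib_two, Nat.cast_one, Real.sqrt_one]
  nlinarith

lemma neg_one_le_perimeterError_three : -1 ≤ perimeterError 3 := by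
  obtain ⟨-, hC⟩ := C_mem_Icc
  obtain ⟨ht, ht'⟩ := five_rpow_neg_quarter_mem_Icc
  obtain ⟨h2, h2'⟩ : √2 ∈ Set.Icc 1.4 1.5 :=
    ⟨Real.le_sqrt_of_sq_le (by norm_num), Real.sqrt_le_iff.2 ⟨by norm_num, by norm_num⟩⟩
  have hS : S 3 = 2 + √2 := by norm_num [S, sum_Icc_succ_top]
  have hF : ((Nat.fib 3 : ℕ) : ℝ) = 2 := by norm_num [Nat.fib_add_two]
  have hCt : C * (√2 - 5 ^ (-(1 : ℝ) / 4)) ≤ 5 * (√2 - 5 ^ (-(1 : ℝ) / 4)) :=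
    mul_le_mul_of_nonneg_right hC (by linarith)
  rw [perimeterError, hS, hF]
  linarith

theorem perimeter_approx :
    ∀ n : ℕ, 1 < n →
      |S n - C * (Real.sqrt (Nat.fib n) - (5 : ℝ) ^ (-(1 : ℝ) / 4))| ≤ 1 := by
  intro n hn
  obtain ⟨m, rfl⟩ := Nat.exists_eq_add_of_le' hn
  obtain ⟨hlo, hhi⟩ := perimeterError_add_two_mem_Icc m
  exact abs_le.2 ⟨neg_one_le_perimeterError_three.trans hlo, hhi.trans perimeterError_two_le⟩
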